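/- If f is a monotone, strict, length-preserving, adjacency-preserving function on finite binary strings, then the induced function F : [0,1] → [0,1] on represented reals is continuous; in fact for all x, y and all k, |x − y| ≤ 2^{−k} implies |F(x) − F(y)| ≤ 2^{−k+2}, so F is uniformly continuous. -/

import Mathlib

/-! Write `x = phi s` and `y = phi t`. For every `k`, `x * 2 ^ k` lies in `[a, a + 1]` where `a` is
the value of the length-`k` prefix of `s`, so `|x - y| ≤ 2 ^ (-k)` forces the length-`k` prefixes
of `s` and `t` to have values at most `2` apart. Walking through the consecutive strings of length
`k` between them, adjacency preservation keeps the values of their images at most `2` apart as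
well. As the images of the prefixes of `s` are the prefixes of a digit sequence of `F x`, this gives
`|F x - F y| ≤ 3 * 2 ^ (-k)`. -/

/-- Base-2 value of a binary string. -/
def valList : List (Fin 2) → ℕ :=
  List.foldl (fun n d => 2 * n + d.val) 0

/-- The length-`k` prefix of an infinite binary sequence, as a binary string. -/
def pre (s : ℕ → Fin 2) (k : ℕ) : List (Fin 2) := (List.range k).map s

/-- The real number in `[0,1]` represented by an infinite binary sequence. -/
noncomputable def phi (s : ℕ → Fin 2) : ℝ := ∑' i : ℕ, ((s i : ℕ) : ℝ) / 2 ^ (i + 1)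

open Real Set

lemma valList_append_singleton (u : List (Fin 2)) (d : Fin 2) :
    valList (u ++ [d]) = 2 * valList u + d.val := by
  simp [valList, List.foldl_append]

lemma valList_lt_two_pow (u : List (Fin 2)) : valList u < 2 ^ u.length := by
  induction u using List.reverseRecOn with
  | nil => simp [valList]
  | append_singleton t d ih =>
    rw [valList_append_singleton, List.length_append, List.length_singleton, pow_succ]
    omega

/-- The big-endian binary string of length `k` of `n % 2 ^ k`. -/
def binString : ℕ → ℕ → List (Fin 2)
  | 0, _ => []
  | k + 1, n => binString k (n / 2) ++ [⟨n % 2, Nat.mod_lt n two_pos⟩]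

lemma length_binString (k n : ℕ) : (binString k n).length = k := by
  induction k generalizing n with
  | zero => rfl
  | succ k ih => simp [binString, ih]

lemma valList_binString {k n : ℕ} (h : n < 2 ^ k) : valList (binString k n) = n := by
  induction k generalizing n with
  | zero => simp_all [binString, valList]
  | succ k ih =>
    rw [binString, valList_append_singleton, ih (by rw [pow_succ] at h; omega)]
    simp only
    omega

lemma binString_valList (u : List (Fin 2)) : binString u.length (valList u) = u := by
  induction u using List.reverseRecOn with
  | nil => rfl
  | append_singleton t d ih =>
    have hd := d.isLt
    rw [List.length_append, List.length_singleton, binString, valList_append_singleton,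
      show (2 * valList t + d.val) / 2 = valList t by omega, ih]
    congr 2
    ext
    simp only
    omega

lemma abs_sub_le_of_abs_succ_sub_le {h : ℕ → ℤ} {N : ℕ}
    (hstep : ∀ i, i + 1 < N → |h (i + 1) - h i| ≤ 1) {m n : ℕ} (hm : m < N) (hn : n < N) :
    |h m - h n| ≤ |(m : ℤ) - n| := by
  wlog hnm : n ≤ m generalizing m n
  · rw [abs_sub_comm, abs_sub_comm (m : ℤ)]
    exact this hn hm (by omega)
  induction m, hnm using Nat.le_induction with
  | base => simp
  | succ m hnm ih =>
    calc |h (m + 1) - h n| ≤ |h (m + 1) - h m| + |h m - h n| := abs_sub_le _ _ _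
      _ ≤ 1 + |(m : ℤ) - n| := add_le_add (hstep m hm) (ih (by omega))
      _ = |((m + 1 : ℕ) : ℤ) - n| := by
        rw [abs_of_nonneg (by omega), abs_of_nonneg (by omega)]
        push_cast
        ring

lemma abs_valList_sub_le_of_adjacency {f : List (Fin 2) → List (Fin 2)}
    (hadj : ∀ u v : List (Fin 2), u.length = v.length →
      |(valList u : ℤ) - (valList v : ℤ)| = 1 →
      |(valList (f u) : ℤ) - (valList (f v) : ℤ)| ≤ 1)
    {u v : List (Fin 2)} (huv : u.length = v.length) :
    |(valList (f u) : ℤ) - valList (f v)| ≤ |(valList u : ℤ) - valList v| := by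
  have hstep : ∀ i, i + 1 < 2 ^ u.length →
      |(valList (f (binString u.length (i + 1))) : ℤ) -
        valList (f (binString u.length i))| ≤ 1 :=
    fun i hi ↦ hadj _ _ (by simp only [length_binString]) (by
      rw [valList_binString hi, valList_binString (by omega)]
      simp)
  have := abs_sub_le_of_abs_succ_sub_le (h := fun i ↦ valList (f (binString u.length i))) hstep
    (valList_lt_two_pow u) (by rw [huv]; exact valList_lt_two_pow v)
  rwa [binString_valList, huv, binString_valList] at this

lemma length_pre (s : ℕ → Fin 2) (k : ℕ) : (pre s k).length = k := by simp [pre]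

lemma pre_succ (s : ℕ → Fin 2) (k : ℕ) : pre s (k + 1) = pre s k ++ [s k] := by
  simp [pre, List.range_succ]

lemma pre_prefix_pre (s : ℕ → Fin 2) {m k : ℕ} (h : m ≤ k) : pre s m <+: pre s k := by
  rw [show pre s m = (pre s k).take m by
    rw [pre, pre, ← List.map_take, List.take_range, min_eq_left h]]
  exact List.take_prefix _ _

/-- The `n`-th digit of `f (pre s k)`, which does not depend on `k > n` when `f` is monotone and
length-preserving. -/
def mapDigits (f : List (Fin 2) → List (Fin 2)) (s : ℕ → Fin 2) (n : ℕ) : Fin 2 :=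
  (f (pre s (n + 1))).getD n 0

lemma pre_mapDigits {f : List (Fin 2) → List (Fin 2)}
    (hmono : ∀ u v : List (Fin 2), u <+: v → f u <+: f v)
    (hlen : ∀ u : List (Fin 2), (f u).length = u.length) (s : ℕ → Fin 2) (m : ℕ) :
    pre (mapDigits f s) m = f (pre s m) := by
  refine List.ext_getElem (by rw [hlen, length_pre, length_pre]) fun i hi _ ↦ ?_
  rw [length_pre] at hi
  simp only [pre, List.getElem_map, List.getElem_range, mapDigits]
  rw [List.getD_eq_getElem _ _ (by simp [hlen])]
  exact (hmono _ _ (pre_prefix_pre s hi)).getElem _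

lemma phi_eq_ofDigits : phi = ofDigits (b := 2) :=
  funext fun s ↦ tsum_congr fun i ↦ by simp [ofDigitsTerm, div_eq_mul_inv]

lemma two_pow_mul_sum_ofDigitsTerm (s : ℕ → Fin 2) (k : ℕ) :
    2 ^ k * ∑ i ∈ Finset.range k, ofDigitsTerm s i = valList (pre s k) := by
  induction k with
  | zero => simp [pre, valList]
  | succ k ih =>
    rw [Finset.sum_range_succ, pre_succ, valList_append_singleton, mul_add, pow_succ,
      mul_comm _ (2 : ℝ), mul_assoc, ih, ofDigitsTerm]
    push_cast
    field_simp
    ring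

lemma phi_mul_two_pow (s : ℕ → Fin 2) (k : ℕ) :
    phi s * 2 ^ k = valList (pre s k) + phi (fun i ↦ s (i + k)) := by
  rw [phi_eq_ofDigits, ofDigits_eq_sum_add_ofDigits s k, ← two_pow_mul_sum_ofDigitsTerm]
  push_cast
  field_simp

lemma phi_mul_two_pow_mem_Icc (s : ℕ → Fin 2) (k : ℕ) :
    phi s * 2 ^ k ∈ Icc (valList (pre s k) : ℝ) (valList (pre s k) + 1) := by
  rw [phi_mul_two_pow, phi_eq_ofDigits]
  exact ⟨by linarith [ofDigits_nonneg (fun i ↦ s (i + k))],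
    by linarith [ofDigits_le_one (fun i ↦ s (i + k))]⟩

lemma surjOn_phi : SurjOn phi univ (Icc 0 1) := phi_eq_ofDigits ▸ ofDigits_SurjOn one_lt_two

lemma abs_sub_le_of_mem_Icc_add_one {a b x y : ℝ} (hx : x ∈ Icc a (a + 1))
    (hy : y ∈ Icc b (b + 1)) : |x - y| ≤ |a - b| + 1 ∧ |a - b| ≤ |x - y| + 1 := by
  obtain ⟨hax, hxa⟩ := hx
  obtain ⟨hby, hyb⟩ := hy
  constructor <;> rw [abs_le] <;> constructor <;>
    linarith [le_abs_self (a - b), neg_abs_le (a - b), le_abs_self (x - y), neg_abs_le (x - y)]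

lemma abs_sub_mul_two_pow_le_three {f : List (Fin 2) → List (Fin 2)}
    (hmono : ∀ u v : List (Fin 2), u <+: v → f u <+: f v)
    (hlen : ∀ u : List (Fin 2), (f u).length = u.length)
    (hadj : ∀ u v : List (Fin 2), u.length = v.length →
      |(valList u : ℤ) - (valList v : ℤ)| = 1 →
      |(valList (f u) : ℤ) - (valList (f v) : ℤ)| ≤ 1)
    (s t : ℕ → Fin 2) {k : ℕ} (hst : |phi s - phi t| * 2 ^ k ≤ 1) :
    |phi (mapDigits f s) - phi (mapDigits f t)| * 2 ^ k ≤ 3 := by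
  have abs_sub_mul (x y : ℝ) : |x - y| * 2 ^ k = |x * 2 ^ k - y * 2 ^ k| := by
    rw [← sub_mul, abs_mul, abs_of_pos (a := (2 : ℝ) ^ k) (by positivity)]
  have hpre : |(valList (pre s k) : ℤ) - valList (pre t k)| ≤ 2 := by
    have := (abs_sub_le_of_mem_Icc_add_one (phi_mul_two_pow_mem_Icc s k)
      (phi_mul_two_pow_mem_Icc t k)).2
    rw [← abs_sub_mul] at this
    have hreal : |(valList (pre s k) : ℝ) - valList (pre t k)| ≤ 2 := by linarith
    exact_mod_cast hreal
  have himage : |(valList (f (pre s k)) : ℤ) - valList (f (pre t k))| ≤ 2 :=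
    (abs_valList_sub_le_of_adjacency hadj (by rw [length_pre, length_pre])).trans hpre
  have := (abs_sub_le_of_mem_Icc_add_one (phi_mul_two_pow_mem_Icc (mapDigits f s) k)
    (phi_mul_two_pow_mem_Icc (mapDigits f t) k)).1
  rw [pre_mapDigits hmono hlen, pre_mapDigits hmono hlen, ← abs_sub_mul] at this
  have himage' : |(valList (f (pre s k)) : ℝ) - valList (f (pre t k))| ≤ 2 := by
    exact_mod_cast himage
  linarith

lemma uniformContinuousOn_of_dyadic_modulus {F : ℝ → ℝ} {S : Set ℝ}
    (hF : ∀ x ∈ S, ∀ y ∈ S, ∀ k : ℕ,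
      |x - y| ≤ (2 : ℝ) ^ (-(k : ℤ)) → |F x - F y| ≤ (2 : ℝ) ^ (2 - (k : ℤ))) :
    UniformContinuousOn F S := by
  rw [Metric.uniformContinuousOn_iff]
  intro ε hε
  obtain ⟨k, hk⟩ := exists_pow_lt_of_lt_one (show 0 < ε / 4 by positivity)
    (show (2 : ℝ)⁻¹ < 1 by norm_num)
  refine ⟨2⁻¹ ^ k, by positivity, fun x hx y hy hxy ↦ ?_⟩
  have := hF x hx y hy k (by rw [zpow_neg, zpow_natCast, ← inv_pow]; exact hxy.le)
  rw [zpow_sub₀ two_ne_zero, zpow_natCast, div_eq_mul_inv, ← inv_pow] at this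
  rw [Real.dist_eq]
  linarith

theorem stmt_14 (f : List (Fin 2) → List (Fin 2))
    (hmono : ∀ u v : List (Fin 2), u <+: v → f u <+: f v)
    (hlen : ∀ u : List (Fin 2), (f u).length = u.length)
    (hadj : ∀ u v : List (Fin 2), u.length = v.length →
      |(valList u : ℤ) - (valList v : ℤ)| = 1 →
      |(valList (f u) : ℤ) - (valList (f v) : ℤ)| ≤ 1)
    (F : ℝ → ℝ)
    (hF : ∀ s g : ℕ → Fin 2, (∀ m : ℕ, ∃ k : ℕ, pre g m <+: f (pre s k)) →
      F (phi s) = phi g) :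
    (∀ x ∈ Set.Icc (0 : ℝ) 1, ∀ y ∈ Set.Icc (0 : ℝ) 1, ∀ k : ℕ,
      |x - y| ≤ (2 : ℝ) ^ (-(k : ℤ)) → |F x - F y| ≤ (2 : ℝ) ^ (2 - (k : ℤ))) ∧
    UniformContinuousOn F (Set.Icc (0 : ℝ) 1) := by
  have hFphi (s : ℕ → Fin 2) : F (phi s) = phi (mapDigits f s) :=
    hF _ _ fun m ↦ ⟨m, pre_mapDigits hmono hlen s m ▸ List.prefix_rfl⟩
  have hmodulus : ∀ x ∈ Set.Icc (0 : ℝ) 1, ∀ y ∈ Set.Icc (0 : ℝ) 1, ∀ k : ℕ,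
      |x - y| ≤ (2 : ℝ) ^ (-(k : ℤ)) → |F x - F y| ≤ (2 : ℝ) ^ (2 - (k : ℤ)) := by
    intro x hx y hy k hxy
    obtain ⟨s, -, rfl⟩ := surjOn_phi hx
    obtain ⟨t, -, rfl⟩ := surjOn_phi hy
    rw [zpow_neg, zpow_natCast, ← one_div, le_div_iff₀ (by positivity)] at hxy
    rw [zpow_sub₀ two_ne_zero, zpow_natCast, le_div_iff₀ (by positivity), hFphi, hFphi]
    linarith [abs_sub_mul_two_pow_le_three hmono hlen hadj s t hxy]
  exact ⟨hmodulus, uniformContinuousOn_of_dyadic_modulus hmodulus⟩
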